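/- Let α > 1. There exists C > 0 depending only on α such that for every t > 0 and every family (a_r)_{r∈[0,t]} of functions a_r : ℤ² → ℂ with a_r(0) = 0, such that r ↦ a_r(m) is continuous on [0,t] for every m and sup_{r∈[0,t]} ∑_{m∈ℤ²∖{0}} |m|^{−2α}|a_r(m)|² < ∞, one has: ∫₀ᵗ ∑_{k∈ℤ²∖{0}} |k|^{−2α} ( ∫ₛᵗ e^{−|k|²(r−s)} ( ∑_{ℓ∈ℤ², 0<|ℓ|≤1} |a_r(ℓ−k)|² )^{1/2} dr )² ds ≤ C t³ sup_{r∈[0,t]} ∑_{m∈ℤ²∖{0}} |m|^{−2α}|a_r(m)|². -/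

import Mathlib

open scoped ENNReal
open MeasureTheory intervalIntegral

/-- Squared Euclidean norm of a lattice point `k ∈ ℤ²`. -/
noncomputable def nsq (k : ℤ × ℤ) : ℝ := (k.1 : ℝ) ^ 2 + (k.2 : ℝ) ^ 2

/-!
Fix `s`. Bounding the heat factor `e^{-|k|²(r-s)}` by `1` and applying Cauchy–Schwarz in `r` gives
`(∫ₛᵗ …)² ≤ t ∫ₛᵗ ‖L₁(σ_k ψ_r)‖² dr`. Since `σ_k` only moves frequencies by some `|ℓ| ≤ 1`, the
weights `|k|^{-2α}` and `|ℓ - k|^{-2α}` are comparable up to `4^α` (as `|ℓ - k|² ≤ 4|k|²`), so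
after reindexing `∑_{k ≠ 0} |k|^{-2α} ‖L₁(σ_k ψ_r)‖² ≤ 9 · 4^α ‖ψ_r‖²_{Ḣ^{-α}}`, the `9` bounding
the number of lattice points with `|ℓ| ≤ 1`. Integrating in `r` and then in `s` yields
`C = 9 · 4^α`.
-/

open Set

lemma nsq_nonneg (k : ℤ × ℤ) : 0 ≤ nsq k := by unfold nsq; positivity

lemma one_le_nsq {k : ℤ × ℤ} (hk : k ≠ 0) : 1 ≤ nsq k := by
  obtain ⟨x, y⟩ := k
  have hxy : x ≠ 0 ∨ y ≠ 0 := by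
    by_contra! h
    exact hk (by simp [h])
  have h : (1 : ℤ) ≤ x ^ 2 + y ^ 2 := by
    rcases hxy with h | h <;> nlinarith [pow_pos (abs_pos.2 h) 2, sq_abs x, sq_abs y]
  unfold nsq
  exact_mod_cast h

lemma nsq_sub_le (ℓ k : ℤ × ℤ) : nsq (ℓ - k) ≤ 2 * nsq ℓ + 2 * nsq k := by
  simp only [nsq, Prod.fst_sub, Prod.snd_sub, Int.cast_sub]
  nlinarith [sq_nonneg ((ℓ.1 : ℝ) + k.1), sq_nonneg ((ℓ.2 : ℝ) + k.2)]

lemma mem_Icc_of_nsq_le_one {ℓ : ℤ × ℤ} (hℓ : nsq ℓ ≤ 1) : ℓ ∈ Finset.Icc (-1, -1) (1, 1) := by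
  obtain ⟨x, y⟩ := ℓ
  have h : x ^ 2 + y ^ 2 ≤ 1 := by unfold nsq at hℓ; exact_mod_cast hℓ
  simp only [Finset.mem_Icc, Prod.mk_le_mk]
  refine ⟨⟨?_, ?_⟩, ?_, ?_⟩ <;> nlinarith [sq_nonneg x, sq_nonneg y]

lemma nsq_rpow_neg_le {α : ℝ} (hα : 0 ≤ α) {k ℓ : ℤ × ℤ} (hk : k ≠ 0) (hℓ : nsq ℓ ≤ 1)
    (hℓk : ℓ - k ≠ 0) : nsq k ^ (-α) ≤ 4 ^ α * nsq (ℓ - k) ^ (-α) := by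
  have hk1 := one_le_nsq hk
  have hle : nsq (ℓ - k) ≤ 4 * nsq k := by linarith [nsq_sub_le ℓ k]
  calc nsq k ^ (-α) = 4 ^ α * (4 * nsq k) ^ (-α) := by
        rw [Real.mul_rpow (by norm_num) (nsq_nonneg k), ← mul_assoc, ← Real.rpow_add (by norm_num),
          add_neg_cancel, Real.rpow_zero, one_mul]
    _ ≤ 4 ^ α * nsq (ℓ - k) ^ (-α) := by
        have hpos : 0 < nsq (ℓ - k) := one_pos.trans_le (one_le_nsq hℓk)
        exact mul_le_mul_of_nonneg_left
          (Real.rpow_le_rpow_of_nonpos hpos hle (neg_nonpos.2 hα)) (by positivity)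

/-- `‖L₁(σ_k ψ)‖²` in Fourier variables: the `ℓ`-th coefficient of `σ_k ψ` is `b (ℓ - k)`, and
`L₁` keeps the modes `0 < |ℓ| ≤ 1`. -/
noncomputable def lowModeNormSq (b : ℤ × ℤ → ℂ) (k : ℤ × ℤ) : ℝ :=
  ∑' ℓ : ℤ × ℤ, if ℓ ≠ 0 ∧ nsq ℓ ≤ 1 then ‖b (ℓ - k)‖ ^ 2 else 0

/-- `‖ψ‖²_{Ḣ^{-α}}` for `ψ` with Fourier coefficients `b`. -/
noncomputable def negSobolevNormSq (α : ℝ) (b : ℤ × ℤ → ℂ) : ℝ≥0∞ :=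
  ∑' m : ℤ × ℤ, if m ≠ 0 then ENNReal.ofReal (nsq m ^ (-α) * ‖b m‖ ^ 2) else 0

lemma lowModeNormSq_eq_sum (b : ℤ × ℤ → ℂ) (k : ℤ × ℤ) :
    lowModeNormSq b k = ∑ ℓ ∈ Finset.Icc (-1, -1) (1, 1),
      if ℓ ≠ 0 ∧ nsq ℓ ≤ 1 then ‖b (ℓ - k)‖ ^ 2 else 0 :=
  tsum_eq_sum fun _ hℓ => if_neg fun h => hℓ (mem_Icc_of_nsq_le_one h.2)

lemma continuousOn_lowModeNormSq {a : ℝ → ℤ × ℤ → ℂ} {S : Set ℝ}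
    (ha : ∀ m, ContinuousOn (fun r => a r m) S) (k : ℤ × ℤ) :
    ContinuousOn (fun r => lowModeNormSq (a r) k) S := by
  simp only [lowModeNormSq_eq_sum]
  refine continuousOn_finsetSum _ fun ℓ _ => ?_
  split_ifs
  exacts [((ha _).norm).pow 2, continuousOn_const]

lemma ofReal_nsq_rpow_mul_norm_sq_le {α : ℝ} (hα : 0 ≤ α) {b : ℤ × ℤ → ℂ} (hb : b 0 = 0)
    {k ℓ : ℤ × ℤ} (hk : k ≠ 0) (hℓ : nsq ℓ ≤ 1) :
    ENNReal.ofReal (nsq k ^ (-α) * ‖b (ℓ - k)‖ ^ 2) ≤ ENNReal.ofReal (4 ^ α) *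
      if ℓ - k ≠ 0 then ENNReal.ofReal (nsq (ℓ - k) ^ (-α) * ‖b (ℓ - k)‖ ^ 2) else 0 := by
  split_ifs with hℓk
  · rw [← ENNReal.ofReal_mul (by positivity), ← mul_assoc]
    exact ENNReal.ofReal_le_ofReal
      (mul_le_mul_of_nonneg_right (nsq_rpow_neg_le hα hk hℓ hℓk) (sq_nonneg _))
  · simp [not_not.1 hℓk, hb]

theorem tsum_nsq_rpow_mul_lowModeNormSq_le {α : ℝ} (hα : 0 ≤ α) {b : ℤ × ℤ → ℂ} (hb : b 0 = 0) :
    ∑' k : ℤ × ℤ, (if k ≠ 0 then ENNReal.ofReal (nsq k ^ (-α) * lowModeNormSq b k) else 0) ≤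
      ENNReal.ofReal (9 * 4 ^ α) * negSobolevNormSq α b := by
  set T : ℤ × ℤ → ℝ≥0∞ := fun m =>
    if m ≠ 0 then ENNReal.ofReal (nsq m ^ (-α) * ‖b m‖ ^ 2) else 0
  have hterm : ∀ k, (if k ≠ 0 then ENNReal.ofReal (nsq k ^ (-α) * lowModeNormSq b k) else 0) ≤
      ∑ ℓ ∈ Finset.Icc (-1, -1) (1, 1), ENNReal.ofReal (4 ^ α) * T (ℓ - k) := by
    intro k
    split_ifs with hk
    · rw [lowModeNormSq_eq_sum, Finset.mul_sum,
        ENNReal.ofReal_sum_of_nonneg fun ℓ _ =>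
          mul_nonneg (Real.rpow_nonneg (nsq_nonneg k) _) (by split_ifs <;> positivity)]
      refine Finset.sum_le_sum fun ℓ _ => ?_
      split_ifs with hℓ
      · exact ofReal_nsq_rpow_mul_norm_sq_le hα hb hk hℓ.2
      · simp
    · exact bot_le
  have hshift : ∀ ℓ, ∑' k, T (ℓ - k) = negSobolevNormSq α b := fun ℓ => (Equiv.subLeft ℓ).tsum_eq T
  calc _ ≤ ∑' k, ∑ ℓ ∈ Finset.Icc (-1, -1) (1, 1), ENNReal.ofReal (4 ^ α) * T (ℓ - k) :=
        ENNReal.tsum_le_tsum hterm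
    _ = ∑ ℓ ∈ Finset.Icc ((-1, -1) : ℤ × ℤ) (1, 1),
          ENNReal.ofReal (4 ^ α) * negSobolevNormSq α b := by
        rw [Summable.tsum_finsetSum fun _ _ => ENNReal.summable]
        simp only [ENNReal.tsum_mul_left, hshift]
    _ = ENNReal.ofReal (9 * 4 ^ α) * negSobolevNormSq α b := by
        rw [Finset.sum_const, show (Finset.Icc ((-1, -1) : ℤ × ℤ) (1, 1)).card = 9 by decide,
          ENNReal.ofReal_mul (by norm_num), nsmul_eq_mul, mul_assoc]
        norm_num

lemma sq_lintegral_le_measure_univ_mul {X : Type*} [MeasurableSpace X] {μ : Measure X}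
    {g : X → ℝ≥0∞} (hg : AEMeasurable g μ) :
    (∫⁻ x, g x ∂μ) ^ 2 ≤ μ univ * ∫⁻ x, g x ^ 2 ∂μ := by
  have h := ENNReal.lintegral_mul_le_Lp_mul_Lq μ Real.HolderConjugate.two_two
    (aemeasurable_const (b := 1)) hg
  simp only [Pi.mul_apply, one_mul, one_pow, lintegral_const, ENNReal.rpow_two] at h
  calc (∫⁻ x, g x ∂μ) ^ 2
      ≤ (μ univ ^ (1 / 2 : ℝ) * (∫⁻ x, g x ^ 2 ∂μ) ^ (1 / 2 : ℝ)) ^ 2 := by gcongr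
    _ = μ univ * ∫⁻ x, g x ^ 2 ∂μ := by
        rw [mul_pow, ← ENNReal.rpow_two, ← ENNReal.rpow_two, ← ENNReal.rpow_mul,
          ← ENNReal.rpow_mul]
        norm_num

lemma ofReal_sq_intervalIntegral_le {f : ℝ → ℝ} {s t : ℝ} (hst : s ≤ t)
    (hf : AEMeasurable f (volume.restrict (Ioc s t))) :
    ENNReal.ofReal ((∫ r in s..t, f r) ^ 2) ≤
      ENNReal.ofReal (t - s) * ∫⁻ r in Ioc s t, ENNReal.ofReal (f r ^ 2) := by
  have hsq : ∀ x : ℝ, ENNReal.ofReal (x ^ 2) = ‖x‖ₑ ^ 2 := fun x => by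
    rw [Real.enorm_eq_ofReal_abs, ← ENNReal.ofReal_pow (abs_nonneg x), sq_abs]
  simp only [hsq, integral_of_le hst]
  calc ‖∫ r in Ioc s t, f r‖ₑ ^ 2 ≤ (∫⁻ r in Ioc s t, ‖f r‖ₑ) ^ 2 := by
        gcongr; exact enorm_integral_le_lintegral_enorm f
    _ ≤ _ := by
        simpa [Real.volume_Ioc] using sq_lintegral_le_measure_univ_mul hf.enorm

lemma ofReal_sq_integral_exp_mul_sqrt_le {c s t : ℝ} {F : ℝ → ℝ} (hc : 0 ≤ c) (hst : s ≤ t)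
    (hF : ContinuousOn F (Icc s t)) :
    ENNReal.ofReal ((∫ r in s..t, Real.exp (-c * (r - s)) * √(F r)) ^ 2) ≤
      ENNReal.ofReal (t - s) * ∫⁻ r in Ioc s t, ENNReal.ofReal (F r) := by
  have hmeas :
      AEMeasurable (fun r => Real.exp (-c * (r - s)) * √(F r)) (volume.restrict (Ioc s t)) :=
    (((by fun_prop : Continuous fun r => Real.exp (-c * (r - s))).continuousOn.mul
      (hF.sqrt)).mono Ioc_subset_Icc_self).aemeasurable measurableSet_Ioc
  refine (ofReal_sq_intervalIntegral_le hst hmeas).trans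
    (mul_le_mul_right (setLIntegral_mono' measurableSet_Ioc fun r hr => ?_) _)
  have hexp : Real.exp (-c * (r - s)) ≤ 1 :=
    Real.exp_le_one_iff.2 (by nlinarith [hr.1])
  calc ENNReal.ofReal ((Real.exp (-c * (r - s)) * √(F r)) ^ 2)
      ≤ ENNReal.ofReal (√(F r) ^ 2) := by
        gcongr
        exact mul_le_of_le_one_left (Real.sqrt_nonneg _) hexp
    _ = ENNReal.ofReal (F r) := by simp [Real.sq_sqrt']

theorem tsum_nsq_rpow_mul_sq_integral_le {α s t : ℝ} {K : ℝ≥0∞} {F : ℤ × ℤ → ℝ → ℝ}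
    (hst : s ≤ t) (hF : ∀ k, ContinuousOn (F k) (Icc s t))
    (hK : ∀ r ∈ Ioc s t,
      ∑' k : ℤ × ℤ, (if k ≠ 0 then ENNReal.ofReal (nsq k ^ (-α) * F k r) else 0) ≤ K) :
    ∑' k : ℤ × ℤ, (if k ≠ 0 then ENNReal.ofReal (nsq k ^ (-α) *
        (∫ r in s..t, Real.exp (-nsq k * (r - s)) * √(F k r)) ^ 2) else 0) ≤
      ENNReal.ofReal ((t - s) ^ 2) * K := by
  set G : ℤ × ℤ → ℝ → ℝ≥0∞ := fun k r =>
    if k ≠ 0 then ENNReal.ofReal (nsq k ^ (-α) * F k r) else 0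
  have hG : ∀ k, AEMeasurable (G k) (volume.restrict (Ioc s t)) := fun k => by
    simp only [G]
    split_ifs
    · exact ((((hF k).mono Ioc_subset_Icc_self).aemeasurable measurableSet_Ioc).const_mul
        _).ennreal_ofReal
    · exact aemeasurable_const
  have hterm : ∀ k, (if k ≠ 0 then ENNReal.ofReal (nsq k ^ (-α) *
        (∫ r in s..t, Real.exp (-nsq k * (r - s)) * √(F k r)) ^ 2) else 0) ≤
      ENNReal.ofReal (t - s) * ∫⁻ r in Ioc s t, G k r := fun k => by
    simp only [G]
    split_ifs
    · have hw : 0 ≤ nsq k ^ (-α) := Real.rpow_nonneg (nsq_nonneg k) _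
      simp only [ENNReal.ofReal_mul hw]
      rw [lintegral_const_mul' _ _ ENNReal.ofReal_ne_top, mul_left_comm]
      exact mul_le_mul_right
        (ofReal_sq_integral_exp_mul_sqrt_le (nsq_nonneg k) hst (hF k)) _
    · simp
  calc _ ≤ ∑' k, ENNReal.ofReal (t - s) * ∫⁻ r in Ioc s t, G k r := ENNReal.tsum_le_tsum hterm
    _ = ENNReal.ofReal (t - s) * ∫⁻ r in Ioc s t, ∑' k, G k r := by
        rw [ENNReal.tsum_mul_left, lintegral_tsum hG]
    _ ≤ ENNReal.ofReal (t - s) * ∫⁻ _ in Ioc s t, K :=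
        mul_le_mul_right (setLIntegral_mono' measurableSet_Ioc hK) _
    _ = ENNReal.ofReal ((t - s) ^ 2) * K := by
        rw [setLIntegral_const, Real.volume_Ioc, ENNReal.ofReal_pow (sub_nonneg.2 hst)]
        ring

/-- Deterministic core of the first bound of Lemma 4.3: for `α > 1` there is `C > 0` such that
for all `t > 0` and all families `(a_r)_{r∈[0,t]}` of Fourier data with `a_r 0 = 0`,
`r ↦ a_r m` continuous and `sup_{r∈[0,t]} ∑_{m≠0} |m|^{−2α}|a_r m|² < ∞`,
`∫₀ᵗ ∑_{k≠0} |k|^{−2α} (∫ₛᵗ e^{−|k|²(r−s)} (∑_{0<|ℓ|≤1} |a_r(ℓ−k)|²)^{1/2} dr)² ds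
  ≤ C t³ sup_{r∈[0,t]} ∑_{m≠0} |m|^{−2α}|a_r m|²`. -/
theorem low_mode_gaussian_bound (α : ℝ) (hα : 1 < α) :
    ∃ C : ℝ, 0 < C ∧ ∀ t : ℝ, 0 < t → ∀ a : ℝ → (ℤ × ℤ) → ℂ,
      (∀ r ∈ Set.Icc (0 : ℝ) t, a r 0 = 0) →
      (∀ m : ℤ × ℤ, ContinuousOn (fun r => a r m) (Set.Icc 0 t)) →
      (⨆ r ∈ Set.Icc (0 : ℝ) t, ∑' m : ℤ × ℤ,
          (if m ≠ 0 then ENNReal.ofReal ((nsq m) ^ (-α) * ‖a r m‖ ^ 2) else 0)) < ⊤ →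
      (∫⁻ s in Set.Ioc (0 : ℝ) t, ∑' k : ℤ × ℤ,
          (if k ≠ 0 then
            ENNReal.ofReal ((nsq k) ^ (-α) *
              (∫ r in s..t, Real.exp (-nsq k * (r - s)) *
                Real.sqrt (∑' ℓ : ℤ × ℤ,
                  if ℓ ≠ 0 ∧ nsq ℓ ≤ 1 then ‖a r (ℓ - k)‖ ^ 2 else 0)) ^ 2)
          else 0)) ≤
        ENNReal.ofReal (C * t ^ 3) *
          ⨆ r ∈ Set.Icc (0 : ℝ) t, ∑' m : ℤ × ℤ,
            (if m ≠ 0 then ENNReal.ofReal ((nsq m) ^ (-α) * ‖a r m‖ ^ 2) else 0) := by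
  refine ⟨9 * 4 ^ α, by positivity, fun t ht a ha0 ha _ => ?_⟩
  set M := ⨆ r ∈ Icc (0 : ℝ) t, negSobolevNormSq α (a r)
  have hC : (0 : ℝ) ≤ 9 * 4 ^ α := by positivity
  calc _ ≤ ∫⁻ _ in Ioc 0 t, ENNReal.ofReal (t ^ 2) * (ENNReal.ofReal (9 * 4 ^ α) * M) := by
        refine setLIntegral_mono' measurableSet_Ioc fun s hs => ?_
        have hsub : Icc s t ⊆ Icc 0 t := Icc_subset_Icc_left hs.1.le
        have hK : ∀ r ∈ Ioc s t, ∑' k : ℤ × ℤ, (if k ≠ 0 then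
            ENNReal.ofReal (nsq k ^ (-α) * lowModeNormSq (a r) k) else 0) ≤
            ENNReal.ofReal (9 * 4 ^ α) * M := fun r hr => by
          have hr' : r ∈ Icc 0 t := hsub (Ioc_subset_Icc_self hr)
          exact (tsum_nsq_rpow_mul_lowModeNormSq_le (by linarith) (ha0 r hr')).trans
            (mul_le_mul_right (le_biSup (fun r => negSobolevNormSq α (a r)) hr') _)
        exact (tsum_nsq_rpow_mul_sq_integral_le hs.2
          (fun k => (continuousOn_lowModeNormSq ha k).mono hsub) hK).trans
          (mul_le_mul_left (ENNReal.ofReal_le_ofReal (by nlinarith [hs.1, hs.2])) _)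
    _ = ENNReal.ofReal (9 * 4 ^ α * t ^ 3) * M := by
        rw [setLIntegral_const, Real.volume_Ioc, sub_zero, ENNReal.ofReal_mul hC,
          ENNReal.ofReal_pow ht.le, ENNReal.ofReal_pow ht.le]
        ring
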